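/- Suppose x ∈ ℂⁿ₁ satisfies x*Cx = ‖Cx‖₁ where C = zz* + Δ. Then |z*x|·(n − |z*x|) ≤ 2n‖Δ‖_op. -/

import Mathlib

open scoped Matrix.Norms.L2Operator
open Matrix Complex

/-!
Write `s = z*x` and `w = Δx`, so that `Cx = s z + w` and `x*Cx = |s|² + x*w`. Since `|zᵢ| = 1`,
`‖Cx‖₁ ≥ n|s| - ‖w‖₁`, while `|x*w| ≤ ‖w‖₁` because `|xᵢ| = 1`. The fixed-point equation thus gives
`n|s| - |s|² ≤ 2‖w‖₁`, and `‖w‖₁ ≤ √n ‖w‖₂ ≤ √n ‖Δ‖ ‖x‖₂ = n ‖Δ‖`.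
-/

namespace EuclideanSpace

variable {𝕜 ι : Type*} [RCLike 𝕜] [Fintype ι]

theorem norm_eq_sqrt_card_of_forall_norm_eq_one {x : EuclideanSpace 𝕜 ι}
    (hx : ∀ i, ‖x i‖ = 1) : ‖x‖ = √(Fintype.card ι) := by
  simp [norm_eq, hx]

theorem sum_norm_le_sqrt_card_mul_norm (v : EuclideanSpace 𝕜 ι) :
    ∑ i, ‖v i‖ ≤ √(Fintype.card ι) * ‖v‖ := by
  have hsq : (∑ i, ‖v i‖) ^ 2 ≤ (√(Fintype.card ι) * ‖v‖) ^ 2 := by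
    rw [mul_pow, Real.sq_sqrt (Nat.cast_nonneg _), norm_sq_eq]
    exact sq_sum_le_card_mul_sum_sq
  exact (pow_le_pow_iff_left₀ (by positivity) (by positivity) two_ne_zero).mp hsq

end EuclideanSpace

section Unimodular

variable {𝕜 ι : Type*} [RCLike 𝕜] [Fintype ι]

theorem Matrix.sum_norm_mulVec_le_card_mul_l2_opNorm [DecidableEq ι] (A : Matrix ι ι 𝕜)
    {x : ι → 𝕜} (hx : ∀ i, ‖x i‖ = 1) : ∑ i, ‖(A *ᵥ x) i‖ ≤ Fintype.card ι * ‖A‖ := by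
  have hxE := EuclideanSpace.norm_eq_sqrt_card_of_forall_norm_eq_one (x := WithLp.toLp 2 x) hx
  set w := (EuclideanSpace.equiv ι 𝕜).symm (A *ᵥ x)
  calc ∑ i, ‖(A *ᵥ x) i‖ ≤ √(Fintype.card ι) * ‖w‖ :=
        EuclideanSpace.sum_norm_le_sqrt_card_mul_norm w
    _ ≤ √(Fintype.card ι) * (‖A‖ * √(Fintype.card ι)) := by
        gcongr
        exact hxE ▸ A.l2_opNorm_mulVec (WithLp.toLp 2 x)
    _ = Fintype.card ι * ‖A‖ := by
        rw [mul_left_comm, Real.mul_self_sqrt (Nat.cast_nonneg _), mul_comm]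

theorem norm_star_dotProduct_le_sum_norm {x : ι → 𝕜} (hx : ∀ i, ‖x i‖ = 1) (w : ι → 𝕜) :
    ‖star x ⬝ᵥ w‖ ≤ ∑ i, ‖w i‖ :=
  (norm_sum_le _ _).trans_eq <| by simp [norm_mul, hx]

theorem card_mul_norm_sub_sum_norm_le_sum_norm_smul_add {z : ι → 𝕜} (hz : ∀ i, ‖z i‖ = 1)
    (s : 𝕜) (w : ι → 𝕜) :
    Fintype.card ι * ‖s‖ - ∑ i, ‖w i‖ ≤ ∑ i, ‖(s • z + w) i‖ := by
  have hterm (i : ι) : ‖s‖ - ‖w i‖ ≤ ‖(s • z + w) i‖ := by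
    have h := norm_sub_le ((s • z + w) i) (w i)
    simp only [Pi.add_apply, Pi.smul_apply, smul_eq_mul, add_sub_cancel_right, norm_mul,
      hz i, mul_one] at h ⊢
    linarith
  calc Fintype.card ι * ‖s‖ - ∑ i, ‖w i‖ = ∑ i, (‖s‖ - ‖w i‖) := by
        rw [Finset.sum_sub_distrib, Finset.sum_const, Finset.card_univ, nsmul_eq_mul]
    _ ≤ ∑ i, ‖(s • z + w) i‖ := Finset.sum_le_sum fun i _ => hterm i

end Unimodular

theorem Matrix.vecMulVec_star_add_mulVec {R ι : Type*} [CommSemiring R] [StarRing R] [Fintype ι]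
    (z x : ι → R) (Δ : Matrix ι ι R) :
    (vecMulVec z (star z) + Δ) *ᵥ x = (star z ⬝ᵥ x) • z + Δ *ᵥ x := by
  rw [add_mulVec, vecMulVec_mulVec, op_smul_eq_smul]

theorem star_dotProduct_smul_self_eq_normSq {ι : Type*} [Fintype ι] (z x : ι → ℂ) :
    star x ⬝ᵥ ((star z ⬝ᵥ x) • z) = ((‖star z ⬝ᵥ x‖ ^ 2 : ℝ) : ℂ) := by
  rw [dotProduct_smul, star_dotProduct x z, smul_eq_mul, star_def, mul_conj', ofReal_pow]

theorem stmt11_general {n : ℕ} (z x : Fin n → ℂ) (Δ : Matrix (Fin n) (Fin n) ℂ)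
    (hz : ∀ i, ‖z i‖ = 1) (hx : ∀ i, ‖x i‖ = 1)
    (C : Matrix (Fin n) (Fin n) ℂ) (hC : C = Matrix.vecMulVec z (star z) + Δ)
    (hfix : star x ⬝ᵥ C.mulVec x = ((∑ i, ‖C.mulVec x i‖ : ℝ) : ℂ)) :
    ‖star z ⬝ᵥ x‖ * ((n : ℝ) - ‖star z ⬝ᵥ x‖) ≤ 2 * n * ‖Δ‖ := by
  set s := star z ⬝ᵥ x
  have hCx : C *ᵥ x = s • z + Δ *ᵥ x := hC ▸ vecMulVec_star_add_mulVec z x Δ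
  have hre : ‖s‖ ^ 2 + (star x ⬝ᵥ Δ *ᵥ x).re = ∑ i, ‖(s • z + Δ *ᵥ x) i‖ := by
    have h := congrArg re hfix
    rwa [hCx, dotProduct_add, star_dotProduct_smul_self_eq_normSq, add_re, ofReal_re,
      ofReal_re] at h
  have hlower := card_mul_norm_sub_sum_norm_le_sum_norm_smul_add hz s (Δ *ᵥ x)
  have hcross := norm_star_dotProduct_le_sum_norm hx (Δ *ᵥ x)
  have hl1 := Δ.sum_norm_mulVec_le_card_mul_l2_opNorm hx
  simp only [Fintype.card_fin] at hlower hl1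
  linarith [re_le_norm (star x ⬝ᵥ Δ *ᵥ x)]

theorem stmt11 {n : ℕ} (z x : Fin n → ℂ) (Δ : Matrix (Fin n) (Fin n) ℂ)
    (hΔ : Δ.IsHermitian)
    (hz : ∀ i, ‖z i‖ = 1) (hx : ∀ i, ‖x i‖ = 1)
    (C : Matrix (Fin n) (Fin n) ℂ) (hC : C = Matrix.vecMulVec z (star z) + Δ)
    (hfix : star x ⬝ᵥ C.mulVec x = ((∑ i, ‖C.mulVec x i‖ : ℝ) : ℂ)) :
    ‖star z ⬝ᵥ x‖ * ((n : ℝ) - ‖star z ⬝ᵥ x‖) ≤ 2 * n * ‖Δ‖ :=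
  stmt11_general z x Δ hz hx C hC hfix
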